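/- With X_{rs} = (E_{rs}+E_{sr})/√2, Y_{rs} = (E_{rs}−E_{sr})/√2, D_t = E_{tt}, let B⁺ = { (1/√2)[[Y_{rs},0],[0,Y_{rs}]], (1/√2)[[iX_{rs},0],[0,−iX_{rs}]] : r < s } ∪ { (1/√2)[[iD_t,0],[0,−iD_t]] : 1 ≤ t ≤ n } and B⁻ = { (1/√2)[[0,Y_{rs}],[−Y_{rs},0]], (1/√2)[[0,iY_{rs}],[iY_{rs},0]] : r < s }. Then ∑_{Z ∈ B⁺} Z² − ∑_{Z ∈ B⁻} Z² = −((2n−1)/2) · I_{2n}. -/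

import Mathlib

/-!
Every element of `B⁺ ∪ B⁻` squares to `±½` times the block-diagonal matrix
`diag(P, P)`, where `P = E_{rr} + E_{ss}` for the pair `r < s` it belongs to and `P = E_{tt}` for
the `D_t`-term. The two positive elements of a pair contribute `-½ diag(P, P)` each, the two
negative ones `+½ diag(P, P)` each, so a pair contributes `-diag(P, P)` to the signed sum and each
`D_t`-term `-½ diag(E_{tt}, E_{tt})`. Every index lies in `n - 1` pairs, so the total is
`(-(n - 1) - ½) • 1`.
-/

open Matrix

/-- `X_{rs} = (E_{rs}+E_{sr})/√2` -/
noncomputable def Xm (n : ℕ) (r s : Fin n) : Matrix (Fin n) (Fin n) ℂ :=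
  (Real.sqrt 2 : ℂ)⁻¹ • (single r s (1 : ℂ) + single s r (1 : ℂ))

/-- `Y_{rs} = (E_{rs}−E_{sr})/√2` -/
noncomputable def Ym (n : ℕ) (r s : Fin n) : Matrix (Fin n) (Fin n) ℂ :=
  (Real.sqrt 2 : ℂ)⁻¹ • (single r s (1 : ℂ) - single s r (1 : ℂ))

/-- `D_t = E_{tt}` -/
def Dm (n : ℕ) (t : Fin n) : Matrix (Fin n) (Fin n) ℂ := single t t (1 : ℂ)

open Finset in
theorem Finset.sum_filter_lt_add_eq_smul_sum {ι M R : Type*} [Fintype ι] [LinearOrder ι] [Ring R]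
    [AddCommGroup M] [Module R M] (f : ι → M) :
    ∑ p ∈ univ.filter (fun p : ι × ι => p.1 < p.2), (f p.1 + f p.2)
      = ((Fintype.card ι : R) - 1) • ∑ i, f i := by
  have swap : ∑ p ∈ univ.filter (fun p : ι × ι => p.1 < p.2), f p.2
      = ∑ p ∈ univ.filter (fun p : ι × ι => p.2 < p.1), f p.1 :=
    sum_nbij' Prod.swap Prod.swap (by simp) (by simp) (by simp) (by simp) (by simp)
  have lt_union_gt : univ.filter (fun p : ι × ι => p.1 < p.2) ∪ univ.filter (fun p => p.2 < p.1)
      = univ.filter (fun p => p.1 ≠ p.2) := by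
    ext p; simp [lt_or_lt_iff_ne]
  have row (i : ι) : ∑ j, (if i ≠ j then f i else 0) = ((Fintype.card ι : R) - 1) • f i := by
    have : 0 < Fintype.card ι := Fintype.card_pos_iff.mpr ⟨i⟩
    rw [← sum_filter, sum_const, filter_ne, card_erase_of_mem (mem_univ i), card_univ,
      ← Nat.cast_smul_eq_nsmul R, Nat.cast_pred this]
  rw [sum_add_distrib, swap, ← sum_union (disjoint_filter.mpr fun p _ h => h.not_gt),
    lt_union_gt, sum_filter, Fintype.sum_prod_type]
  simp only [row, ← smul_sum]

section BlockDiagonal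

variable {R m : Type*} [Semiring R]

def blockDiag₂ : Matrix m m R →ₗ[R] Matrix (m ⊕ m) (m ⊕ m) R where
  toFun A := fromBlocks A 0 0 A
  map_add' A B := by simp [fromBlocks_add]
  map_smul' c A := by simp [fromBlocks_smul]

theorem blockDiag₂_apply (A : Matrix m m R) : blockDiag₂ A = fromBlocks A 0 0 A := rfl

theorem blockDiag₂_one [DecidableEq m] : blockDiag₂ (1 : Matrix m m R) = 1 := fromBlocks_one

theorem fromBlocks_zero₁₁_zero₂₂_sq [Fintype m] [DecidableEq m] (B C : Matrix m m R) :
    fromBlocks 0 B C 0 ^ 2 = fromBlocks (B * C) 0 0 (C * B) := by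
  simp [sq, fromBlocks_multiply]

end BlockDiagonal

theorem inv_sqrt_two_sq : ((Real.sqrt 2 : ℂ)⁻¹) ^ 2 = 2⁻¹ := by
  rw [inv_pow, ← Complex.ofReal_pow, Real.sq_sqrt zero_le_two]; norm_num

section

variable {n : ℕ} {r s : Fin n}

theorem Ym_sq (h : r ≠ s) : Ym n r s ^ 2 = -(2⁻¹ : ℂ) • (single r r 1 + single s s 1) := by
  rw [Ym, smul_pow, inv_sqrt_two_sq, sq]
  simp only [sub_mul, mul_sub, single_mul_single_same, single_mul_single_of_ne _ _ _ _ h,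
    single_mul_single_of_ne _ _ _ _ h.symm, mul_one]
  module

theorem Xm_sq (h : r ≠ s) : Xm n r s ^ 2 = (2⁻¹ : ℂ) • (single r r 1 + single s s 1) := by
  rw [Xm, smul_pow, inv_sqrt_two_sq, sq]
  simp only [add_mul, mul_add, single_mul_single_same, single_mul_single_of_ne _ _ _ _ h,
    single_mul_single_of_ne _ _ _ _ h.symm, mul_one]
  module

theorem Dm_sq (t : Fin n) : Dm n t ^ 2 = Dm n t := by
  rw [Dm, sq, single_mul_single_same, mul_one]

theorem positive_pair_sq_add_sq (h : r ≠ s) :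
    ((Real.sqrt 2 : ℂ)⁻¹ • fromBlocks (Ym n r s) 0 0 (Ym n r s)) ^ 2
      + ((Real.sqrt 2 : ℂ)⁻¹ •
          fromBlocks (Complex.I • Xm n r s) 0 0 (-(Complex.I • Xm n r s))) ^ 2
    = -(2⁻¹ : ℂ) • blockDiag₂ (single r r 1 + single s s 1) := by
  simp only [smul_pow, inv_sqrt_two_sq, fromBlocks_diagonal_pow, neg_sq, Complex.I_sq,
    Ym_sq h, Xm_sq h]
  simp only [← blockDiag₂_apply, map_smul]
  module

theorem negative_pair_sq_add_sq (h : r ≠ s) :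
    ((Real.sqrt 2 : ℂ)⁻¹ • fromBlocks 0 (Ym n r s) (-(Ym n r s)) 0) ^ 2
      + ((Real.sqrt 2 : ℂ)⁻¹ •
          fromBlocks 0 (Complex.I • Ym n r s) (Complex.I • Ym n r s) 0) ^ 2
    = (2⁻¹ : ℂ) • blockDiag₂ (single r r 1 + single s s 1) := by
  simp only [smul_pow, inv_sqrt_two_sq, fromBlocks_zero₁₁_zero₂₂_sq, mul_neg, neg_mul, ← sq,
    Complex.I_sq, Ym_sq h]
  simp only [← blockDiag₂_apply, map_smul, map_neg]
  module

theorem cartan_sq (t : Fin n) :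
    ((Real.sqrt 2 : ℂ)⁻¹ • fromBlocks (Complex.I • Dm n t) 0 0 (-(Complex.I • Dm n t))) ^ 2
    = -(2⁻¹ : ℂ) • blockDiag₂ (single t t 1) := by
  simp only [smul_pow, inv_sqrt_two_sq, fromBlocks_diagonal_pow, neg_sq, Complex.I_sq, Dm_sq]
  simp only [← blockDiag₂_apply, map_smul, Dm]
  module

end

/-- for the orthonormal bases `B⁺`, `B⁻` of the definite parts of
`so*(2n)`, `∑_{Z∈B⁺} Z² − ∑_{Z∈B⁻} Z² = −((2n−1)/2)·I_{2n}`. -/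
theorem casimir_soStar (n : ℕ) :
    ((∑ p ∈ Finset.univ.filter (fun p : Fin n × Fin n => p.1 < p.2),
      (((Real.sqrt 2 : ℂ)⁻¹ •
          fromBlocks (Ym n p.1 p.2) 0 0 (Ym n p.1 p.2)) ^ 2
      + ((Real.sqrt 2 : ℂ)⁻¹ •
          fromBlocks (Complex.I • Xm n p.1 p.2) 0 0 (-(Complex.I • Xm n p.1 p.2))) ^ 2))
    + ∑ t : Fin n,
      ((Real.sqrt 2 : ℂ)⁻¹ •
          fromBlocks (Complex.I • Dm n t) 0 0 (-(Complex.I • Dm n t))) ^ 2)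
    - (∑ p ∈ Finset.univ.filter (fun p : Fin n × Fin n => p.1 < p.2),
      (((Real.sqrt 2 : ℂ)⁻¹ •
          fromBlocks 0 (Ym n p.1 p.2) (-(Ym n p.1 p.2)) 0) ^ 2
      + ((Real.sqrt 2 : ℂ)⁻¹ •
          fromBlocks 0 (Complex.I • Ym n p.1 p.2) (Complex.I • Ym n p.1 p.2) 0) ^ 2))
    = (-((2 * (n : ℂ) - 1) / 2)) • (1 : Matrix (Fin n ⊕ Fin n) (Fin n ⊕ Fin n) ℂ) := by
  have hne {p : Fin n × Fin n} (hp : p ∈ Finset.univ.filter fun p => p.1 < p.2) : p.1 ≠ p.2 :=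
    (Finset.mem_filter.mp hp).2.ne
  rw [Finset.sum_congr rfl fun p hp => positive_pair_sq_add_sq (hne hp),
    Finset.sum_congr rfl fun p hp => negative_pair_sq_add_sq (hne hp),
    Finset.sum_congr rfl fun t _ => cartan_sq t, ← Finset.smul_sum, ← Finset.smul_sum,
    ← Finset.smul_sum, ← map_sum, ← map_sum,
    Finset.sum_filter_lt_add_eq_smul_sum (R := ℂ) fun i => single i i (1 : ℂ),
    sum_single_one, map_smul, blockDiag₂_one, Fintype.card_fin]
  module
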